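/- Let s = ([i_1,j_1],…,[i_r,j_r]) ∈ 𝕀_n^r with n ≥ n(s), i_1 ≥ i_2 ≥ ⋯ ≥ i_r and j_1 ≥ j_2 ≥ ⋯ ≥ j_r. Define σ_s ∈ Σ_r by downward recursion: σ_s(r) = min{t ∈ {1,…,r} : i_t ≤ j_r} and, for p < r, σ_s(p) = min{t ∈ {1,…,r} \ {σ_s(p+1),…,σ_s(r)} : i_t ≤ j_p} (these sets are nonempty, so σ_s is a well-defined permutation). Then s_0 := ([i_{σ_s(1)},j_1],…,[i_{σ_s(r)},j_r]) lies in 𝕀_{n,+}^r, s_0 ∈ s̄[n], and s_0 is closed; indeed for all 1 ≤ p < t ≤ r the pair ([i_{σ_s(p)},j_p],[i_{σ_s(t)},j_t]) is not connected. -/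

import Mathlib

open scoped Classical

/-- An interval `[i,j]` is encoded as the pair `(i,j)` of integers. -/
abbrev Intv := ℤ × ℤ

/-- Membership in `𝕀ₙ`: `0 ≤ j - i ≤ n + 1`. -/
def memI (n : ℕ) (a : Intv) : Prop := 0 ≤ a.2 - a.1 ∧ a.2 - a.1 ≤ (n : ℤ) + 1

/-- The pair `([i₁,j₁],[i₂,j₂])` is connected (for the parameter `n`). -/
def Conn (n : ℕ) (a b : Intv) : Prop :=
  (b.1 < a.1 ∧ a.1 ≤ b.2 ∧ b.2 < a.2 ∧ 0 ≤ a.2 - b.1 ∧ a.2 - b.1 ≤ (n : ℤ) + 1) ∨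
  (a.1 < b.1 ∧ b.1 ≤ a.2 ∧ a.2 < b.2 ∧ 0 ≤ b.2 - a.1 ∧ b.2 - a.1 ≤ (n : ℤ) + 1)

/-- The partial map `τ_{m,ℓ}`, with `none` playing the role of `0`. -/
noncomputable def tau (n : ℕ) {r : ℕ} (m l : Fin r) (s : Fin r → Intv) :
    Option (Fin r → Intv) :=
  if Conn n (s m) (s l) then
    some (Function.update (Function.update s m ((s l).1, (s m).2)) l ((s m).1, (s l).2))
  else none

/-- A subset `J ⊆ 𝕀ₙ^r` is closed. -/
def IsClosedSet (n : ℕ) {r : ℕ} (J : Set (Fin r → Intv)) : Prop :=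
  ∀ s ∈ J, ∀ m l : Fin r, m < l →
    (∀ s', tau n m l s = some s' → s' ∈ J) ∧
    ((s m).2 = (s l).2 → (fun u => s (Equiv.swap m l u)) ∈ J)

/-- `s̄[n]`: the smallest closed subset of `𝕀ₙ^r` containing `s`. -/
def sbar (n : ℕ) {r : ℕ} (s : Fin r → Intv) : Set (Fin r → Intv) :=
  ⋂₀ {J | IsClosedSet n J ∧ s ∈ J}

/-- `s` is a closed element: `s̄[n] ⊆ Σ_r · s`. -/
def IsClosedElt (n : ℕ) {r : ℕ} (s : Fin r → Intv) : Prop :=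
  ∀ s' ∈ sbar n s, ∃ w : Equiv.Perm (Fin r), s' = fun u => s (w u)

/-- `s ∈ 𝕀_{n,+}^r`: all entries are intervals and the right endpoints are
weakly decreasing. -/
def Iplus (n : ℕ) {r : ℕ} (s : Fin r → Intv) : Prop :=
  (∀ t, memI n (s t)) ∧ ∀ p : ℕ, (hp : p + 1 < r) → (s ⟨p + 1, hp⟩).2 ≤ (s ⟨p, by omega⟩).2

/-- `Σ_r(s)`: the subgroup of `Σ_r` generated by the simple transpositions `σ_p`
with `j_p = j_{p+1}`. -/
def SigmaS {r : ℕ} (s : Fin r → Intv) : Subgroup (Equiv.Perm (Fin r)) :=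
  Subgroup.closure { w | ∃ p : ℕ, ∃ hp : p + 1 < r,
      (s ⟨p, by omega⟩).2 = (s ⟨p + 1, hp⟩).2 ∧
      w = Equiv.swap ⟨p, by omega⟩ ⟨p + 1, hp⟩ }

/-! ### Auxiliary lemmas -/

lemma conn_comm {n : ℕ} {a b : Intv} : Conn n a b ↔ Conn n b a := or_comm

lemma self_mem_sbar (n : ℕ) {r : ℕ} (s : Fin r → Intv) : s ∈ sbar n s :=
  Set.mem_sInter.2 fun _ hJ => hJ.2

lemma sbar_isClosedSet (n : ℕ) {r : ℕ} (s : Fin r → Intv) : IsClosedSet n (sbar n s) := by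
  intro x hx m l hml
  constructor
  · intro s' hs'
    exact Set.mem_sInter.2 fun J hJ => (hJ.1 x (Set.mem_sInter.1 hx J hJ) m l hml).1 s' hs'
  · intro he
    exact Set.mem_sInter.2 fun J hJ => (hJ.1 x (Set.mem_sInter.1 hx J hJ) m l hml).2 he

lemma sbar_subset {n : ℕ} {r : ℕ} {s s' : Fin r → Intv} (h : s' ∈ sbar n s) :
    sbar n s' ⊆ sbar n s := fun x hx =>
  Set.mem_sInter.1 hx (sbar n s) ⟨sbar_isClosedSet n s, h⟩

/-- Exchange of left endpoints is always available (as a `τ`-move, a swap, or a no-op). -/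
lemma exch {n r : ℕ} (s : Fin r → Intv) (m l : Fin r) (hml : m < l)
    (h1 : (s l).1 ≤ (s m).1) (h2 : (s m).1 ≤ (s l).2) (h3 : (s l).2 ≤ (s m).2)
    (h4 : (s m).2 - (s l).1 ≤ (n : ℤ) + 1) :
    (Function.update (Function.update s m ((s l).1, (s m).2)) l ((s m).1, (s l).2))
      ∈ sbar n s := by
  have hne : m ≠ l := ne_of_lt hml
  rcases eq_or_lt_of_le h1 with e1 | l1
  · have hfun : (Function.update (Function.update s m ((s l).1, (s m).2)) l
        ((s m).1, (s l).2)) = s := by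
      funext u
      rcases eq_or_ne u l with rfl | hul
      · rw [Function.update_self]
        exact Prod.ext (e1.symm ▸ rfl) rfl
      · rw [Function.update_of_ne hul]
        rcases eq_or_ne u m with rfl | hum
        · rw [Function.update_self]
          exact Prod.ext e1 rfl
        · rw [Function.update_of_ne hum]
    rw [hfun]; exact self_mem_sbar n s
  rcases eq_or_lt_of_le h3 with e3 | l3
  · have hsw := ((sbar_isClosedSet n s) s (self_mem_sbar n s) m l hml).2 e3.symm
    have hfun : (fun u => s (Equiv.swap m l u)) =
        (Function.update (Function.update s m ((s l).1, (s m).2)) l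
          ((s m).1, (s l).2)) := by
      funext u
      rcases eq_or_ne u l with rfl | hul
      · rw [Function.update_self, Equiv.swap_apply_right]
        exact Prod.ext rfl e3.symm
      · rw [Function.update_of_ne hul]
        rcases eq_or_ne u m with rfl | hum
        · rw [Function.update_self, Equiv.swap_apply_left]
          exact Prod.ext rfl e3
        · rw [Function.update_of_ne hum, Equiv.swap_apply_of_ne_of_ne hum hul]
    rw [← hfun]; exact hsw
  · have hc : Conn n (s m) (s l) := Or.inl ⟨l1, h2, l3, by linarith, h4⟩
    refine ((sbar_isClosedSet n s) s (self_mem_sbar n s) m l hml).1 _ ?_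
    simp [tau, hc]

/-- The inversion set of a permutation of `Fin r`. -/
noncomputable def invs {r : ℕ} (ρ : Equiv.Perm (Fin r)) : Finset (Fin r × Fin r) :=
  Finset.univ.filter (fun x => x.1 < x.2 ∧ ρ x.2 < ρ x.1)

lemma perm_eq_one_of_no_inv {r : ℕ} (ρ : Equiv.Perm (Fin r)) (h : invs ρ = ∅) : ρ = 1 := by
  have hmono : StrictMono ρ := by
    intro a b hab
    rcases lt_trichotomy (ρ a) (ρ b) with h' | h' | h'
    · exact h'
    · exact absurd (ρ.injective h') (ne_of_lt hab)
    · exact absurd (by simp [invs, hab, h'] : (a, b) ∈ invs ρ) (by simp [h])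
  have : ⇑ρ = id := (StrictMono.range_inj hmono strictMono_id).1
    (by rw [Set.range_id, Set.range_eq_univ.2 ρ.surjective])
  exact Equiv.ext fun u => congrFun this u

/-- Key sorting lemma: any "state" `u ↦ (i_{ρ(u)}, j_u)` with `i_{ρ(u)} ≤ j_u`
for all `u` belongs to `s̄[n]`. -/
lemma state_mem_sbar {n r : ℕ} (s : Fin r → Intv)
    (hn : ∀ t p : Fin r, (s t).2 - (s p).1 ≤ (n : ℤ) + 1)
    (hi : ∀ p q : Fin r, p ≤ q → (s q).1 ≤ (s p).1)
    (hj : ∀ p q : Fin r, p ≤ q → (s q).2 ≤ (s p).2) :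
    ∀ (N : ℕ) (ρ : Equiv.Perm (Fin r)), (invs ρ).card ≤ N →
      (∀ u, (s (ρ u)).1 ≤ (s u).2) →
      (fun u => ((s (ρ u)).1, (s u).2)) ∈ sbar n s := by
  intro N
  induction N with
  | zero =>
    intro ρ hcard _
    have hρ : ρ = 1 := perm_eq_one_of_no_inv ρ (Finset.card_eq_zero.1 (Nat.le_zero.1 hcard))
    have : (fun u => ((s (ρ u)).1, (s u).2)) = s := by
      funext u; rw [hρ]; simp
    rw [this]; exact self_mem_sbar n s
  | succ N ih =>
    intro ρ hcard hinvt
    by_cases h0 : (invs ρ).card ≤ N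
    · exact ih ρ h0 hinvt
    have hcard1 : (invs ρ).card = N + 1 := le_antisymm hcard (by omega)
    have hne : (invs ρ).Nonempty := Finset.card_pos.1 (by omega)
    -- the set of "tops of inversions"
    have hTne : (Finset.univ.filter (fun v : Fin r => ∃ u, u < v ∧ ρ v < ρ u)).Nonempty := by
      obtain ⟨x, hx⟩ := hne
      simp only [invs, Finset.mem_filter, Finset.mem_univ, true_and] at hx
      refine ⟨x.2, ?_⟩
      simp only [Finset.mem_filter, Finset.mem_univ, true_and]
      exact ⟨x.1, hx.1, hx.2⟩
    set T := Finset.univ.filter (fun v : Fin r => ∃ u, u < v ∧ ρ v < ρ u) with hT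
    set v := T.min' hTne with hvdef
    have hvT : v ∈ T := T.min'_mem hTne
    have hv : ∃ u, u < v ∧ ρ v < ρ u := by
      simpa only [hT, Finset.mem_filter, Finset.mem_univ, true_and] using hvT
    have hv0 : 0 < (v : ℕ) := by
      obtain ⟨u, hu, _⟩ := hv
      have := (Fin.lt_def.1 hu)
      omega
    set k : Fin r := ⟨(v : ℕ) - 1, by omega⟩ with hkdef
    have hkv : k < v := by
      rw [Fin.lt_def]; simp [hkdef]; omega
    have hkv1 : (k : ℕ) + 1 = (v : ℕ) := by simp [hkdef]; omega
    have hρkv : ρ v < ρ k := by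
      by_contra hcon
      have hkne : ρ k ≠ ρ v := fun h => (ne_of_lt hkv) (ρ.injective h)
      have h2 : ρ k < ρ v := lt_of_le_of_ne (not_lt.1 hcon) hkne
      obtain ⟨u, huv, hu⟩ := hv
      have huk : u < k := by
        rcases eq_or_ne u k with hune | hune
        · rw [hune] at hu
          exact absurd hu (not_lt.2 (le_of_lt h2))
        · rw [Fin.lt_def] at huv ⊢
          rw [Fin.ne_iff_vne] at hune
          have hkval : (k : ℕ) = (v : ℕ) - 1 := rfl
          omega
      have hkT : k ∈ T := by
        simp only [hT, Finset.mem_filter, Finset.mem_univ, true_and]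
        exact ⟨u, huk, lt_trans h2 hu⟩
      exact absurd (T.min'_le k hkT) (not_le.2 hkv)
    set w := Equiv.swap k v with hwdef
    set ρ' := ρ * w with hρ'def
    have hρ'k : ρ' k = ρ v := by
      simp [hρ'def, hwdef, Equiv.Perm.mul_apply, Equiv.swap_apply_left]
    have hρ'v : ρ' v = ρ k := by
      simp [hρ'def, hwdef, Equiv.Perm.mul_apply, Equiv.swap_apply_right]
    have hρ'o : ∀ u, u ≠ k → u ≠ v → ρ' u = ρ u := by
      intro u h1 h2
      simp [hρ'def, hwdef, Equiv.Perm.mul_apply, Equiv.swap_apply_of_ne_of_ne h1 h2]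
    -- ordering is preserved by the swap away from `(k, v)`
    have hord : ∀ a b : Fin r, a < b → ((a, b) : Fin r × Fin r) ≠ (k, v) → w a < w b := by
      intro a b hab hne'
      rw [Fin.lt_def] at hab
      have hkval : (k : ℕ) = (v : ℕ) - 1 := rfl
      rcases eq_or_ne a k with hak | hak
      · have hbv : b ≠ v := by
          intro hbv
          exact hne' (by rw [hak, hbv])
        have hbk : b ≠ k := by
          intro hbk
          rw [hak, hbk] at hab
          omega
        rw [hak, Equiv.swap_apply_left, Equiv.swap_apply_of_ne_of_ne hbk hbv]
        rw [Fin.lt_def]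
        rw [Fin.ne_iff_vne] at hbv
        rw [hak] at hab
        omega
      rcases eq_or_ne a v with hav | hav
      · have hbk : b ≠ k := by
          rw [Fin.ne_iff_vne]
          rw [hav] at hab
          omega
        have hbv : b ≠ v := by
          intro hbv
          rw [hav, hbv] at hab
          omega
        rw [hav, Equiv.swap_apply_right, Equiv.swap_apply_of_ne_of_ne hbk hbv]
        rw [Fin.lt_def]
        rw [hav] at hab
        omega
      · rw [Equiv.swap_apply_of_ne_of_ne hak hav]
        rcases eq_or_ne b k with hbk | hbk
        · rw [hbk, Equiv.swap_apply_left, Fin.lt_def]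
          rw [hbk] at hab
          omega
        rcases eq_or_ne b v with hbv | hbv
        · rw [hbv, Equiv.swap_apply_right, Fin.lt_def]
          rw [Fin.ne_iff_vne] at hak
          rw [hbv] at hab
          omega
        · rw [Equiv.swap_apply_of_ne_of_ne hbk hbv]
          exact Fin.lt_def.2 hab
    have hwk : w k = v := Equiv.swap_apply_left k v
    have hwv : w v = k := Equiv.swap_apply_right k v
    have hww : ∀ u, w (w u) = u := fun u => Equiv.swap_apply_self k v u
    have hρ'w : ∀ u, ρ' u = ρ (w u) := fun u => rfl
    -- the inversion count strictly decreases
    have hkvinv : (k, v) ∈ invs ρ := by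
      simp only [invs, Finset.mem_filter, Finset.mem_univ, true_and]
      exact ⟨hkv, hρkv⟩
    have hcard' : (invs ρ').card ≤ N := by
      have hbij : (invs ρ').card = ((invs ρ).erase (k, v)).card := by
        refine Finset.card_nbij' (fun x => (w x.1, w x.2)) (fun x => (w x.1, w x.2))
          ?_ ?_ ?_ ?_
        · rintro ⟨a, b⟩ hx
          simp only [Finset.mem_coe] at hx ⊢
          simp only [invs, Finset.mem_filter, Finset.mem_univ, true_and] at hx
          have hxne : ((a, b) : Fin r × Fin r) ≠ (k, v) := by
            intro hcc
            have ha : a = k := congrArg Prod.fst hcc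
            have hb : b = v := congrArg Prod.snd hcc
            subst ha; subst hb
            rw [hρ'v, hρ'k] at hx
            exact absurd hx.2 (not_lt.2 (le_of_lt hρkv))
          have hordx : w a < w b := hord a b hx.1 hxne
          rw [Finset.mem_erase]
          constructor
          · intro hcc
            have ha : w a = k := congrArg Prod.fst hcc
            have hb : w b = v := congrArg Prod.snd hcc
            have ha' : a = v := by rw [← hww a, ha, hwk]
            have hb' : b = k := by rw [← hww b, hb, hwv]
            rw [ha', hb'] at hx
            exact absurd (lt_trans hkv hx.1) (lt_irrefl k)
          · simp only [invs, Finset.mem_filter, Finset.mem_univ, true_and]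
            refine ⟨hordx, ?_⟩
            rw [← hρ'w a, ← hρ'w b]
            exact hx.2
        · rintro ⟨a, b⟩ hx
          simp only [Finset.mem_coe] at hx ⊢
          rw [Finset.mem_erase] at hx
          obtain ⟨hxne, hx⟩ := hx
          simp only [invs, Finset.mem_filter, Finset.mem_univ, true_and] at hx
          have hordx : w a < w b := hord a b hx.1 hxne
          simp only [invs, Finset.mem_filter, Finset.mem_univ, true_and]
          refine ⟨hordx, ?_⟩
          rw [hρ'w (w a), hρ'w (w b), hww, hww]
          exact hx.2
        · rintro ⟨a, b⟩ _
          simp [hww]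
        · rintro ⟨a, b⟩ _
          simp [hww]
      rw [hbij]
      rw [Finset.card_erase_of_mem hkvinv, hcard1]
      omega
    have hinv' : ∀ u, (s (ρ' u)).1 ≤ (s u).2 := by
      intro u
      rcases eq_or_ne u k with rfl | huk
      · rw [hρ'k]
        exact le_trans (hinvt v) (hj k v (le_of_lt hkv))
      rcases eq_or_ne u v with rfl | huv
      · rw [hρ'v]
        exact le_trans (hi (ρ v) (ρ k) (le_of_lt hρkv)) (hinvt v)
      · rw [hρ'o u huk huv]
        exact hinvt u
    have hstep := ih ρ' hcard' hinv'
    set s' : Fin r → Intv := fun u => ((s (ρ' u)).1, (s u).2) with hs'def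
    have hexch := exch (n := n) s' k v hkv
      (by simp only [hs'def, hρ'k, hρ'v]; exact hi (ρ v) (ρ k) (le_of_lt hρkv))
      (by simp only [hs'def, hρ'k]; exact hinvt v)
      (by simp only [hs'def]; exact hj k v (le_of_lt hkv))
      (by simp only [hs'def, hρ'v]; exact hn k (ρ k))
    have hfun : (Function.update (Function.update s' k ((s' v).1, (s' k).2)) v
        ((s' k).1, (s' v).2)) = (fun u => ((s (ρ u)).1, (s u).2)) := by
      funext u
      rcases eq_or_ne u v with rfl | huv
      · rw [Function.update_self]
        simp only [hs'def, hρ'k]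
      · rw [Function.update_of_ne huv]
        rcases eq_or_ne u k with rfl | huk
        · rw [Function.update_self]
          simp only [hs'def, hρ'v]
        · rw [Function.update_of_ne huk]
          simp only [hs'def, hρ'o u huk huv]
    rw [hfun] at hexch
    exact sbar_subset hstep hexch


/-! ### Construction of the permutation `σ_s` -/

/-- Candidate set: indices not yet used whose left endpoint is at most `(s p).2`. -/
noncomputable def candFn {r : ℕ} (s : Fin r → Intv) (L : List (Fin r)) (p : Fin r) :
    Finset (Fin r) :=
  Finset.univ.filter (fun t => t ∉ L ∧ (s t).1 ≤ (s p).2)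

/-- One greedy step: the least candidate (or a dummy value). -/
noncomputable def stepFn {r : ℕ} (hr : 0 < r) (s : Fin r → Intv) (L : List (Fin r))
    (p : Fin r) : Fin r :=
  if h : (candFn s L p).Nonempty then (candFn s L p).min' h else ⟨0, hr⟩

/-- The list of values chosen so far, from position `r-1` downwards. -/
noncomputable def LFn {r : ℕ} (hr : 0 < r) (s : Fin r → Intv) : ℕ → List (Fin r)
  | 0 => []
  | (k + 1) => stepFn hr s (LFn hr s k) ⟨r - 1 - k, by omega⟩ :: LFn hr s k

/-- The function `σ_s`. -/
noncomputable def sigFn {r : ℕ} (hr : 0 < r) (s : Fin r → Intv) (p : Fin r) : Fin r :=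
  stepFn hr s (LFn hr s (r - 1 - (p : ℕ))) p

lemma LFn_len {r : ℕ} (hr : 0 < r) (s : Fin r → Intv) : ∀ k, (LFn hr s k).length = k := by
  intro k
  induction k with
  | zero => rfl
  | succ k ih => simp [LFn, ih]

lemma sig_eq_step {r : ℕ} (hr : 0 < r) (s : Fin r → Intv) (k : ℕ) (hk : k < r) :
    stepFn hr s (LFn hr s k) ⟨r - 1 - k, by omega⟩ = sigFn hr s ⟨r - 1 - k, by omega⟩ := by
  show stepFn hr s (LFn hr s k) _ =
    stepFn hr s (LFn hr s (r - 1 - (r - 1 - k))) _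
  rw [show r - 1 - (r - 1 - k) = k from by omega]

lemma mem_LFn {r : ℕ} (hr : 0 < r) (s : Fin r → Intv) :
    ∀ k, k ≤ r → ∀ t, t ∈ LFn hr s k ↔ ∃ q : Fin r, r - k ≤ (q : ℕ) ∧ sigFn hr s q = t := by
  intro k
  induction k with
  | zero =>
    intro _ t
    refine iff_of_false (by simp [LFn]) ?_
    rintro ⟨q, hq, _⟩
    have := q.isLt
    omega
  | succ k ih =>
    intro hk t
    rw [show LFn hr s (k + 1) = stepFn hr s (LFn hr s k) ⟨r - 1 - k, by omega⟩ :: LFn hr s k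
      from rfl, List.mem_cons, sig_eq_step hr s k (by omega)]
    constructor
    · rintro (h | h)
      · refine ⟨⟨r - 1 - k, by omega⟩, ?_, h.symm⟩
        show r - (k + 1) ≤ r - 1 - k
        omega
      · obtain ⟨q, hq, he⟩ := (ih (by omega) t).1 h
        exact ⟨q, by omega, he⟩
    · rintro ⟨q, hq, rfl⟩
      rcases eq_or_ne (q : ℕ) (r - 1 - k) with he | he
      · left
        have hq' : q = (⟨r - 1 - k, by omega⟩ : Fin r) := Fin.ext he
        rw [hq']
      · right
        refine (ih (by omega) _).2 ⟨q, ?_, rfl⟩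
        have := q.isLt
        omega

lemma cand_ne {r : ℕ} (hr : 0 < r) (s : Fin r → Intv)
    (hmem : ∀ t : Fin r, (s t).1 ≤ (s t).2)
    (hi : ∀ p q : Fin r, p ≤ q → (s q).1 ≤ (s p).1) (p : Fin r) :
    (candFn s (LFn hr s (r - 1 - (p : ℕ))) p).Nonempty := by
  set k := r - 1 - (p : ℕ) with hkdef
  have hlen : (LFn hr s k).length = k := LFn_len hr s k
  have hsub : Finset.Ici p \ (LFn hr s k).toFinset ⊆ candFn s (LFn hr s k) p := by
    intro t ht
    rw [Finset.mem_sdiff, Finset.mem_Ici] at ht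
    simp only [candFn, Finset.mem_filter, Finset.mem_univ, true_and]
    exact ⟨fun hmem' => ht.2 (List.mem_toFinset.2 hmem'), le_trans (hi p t ht.1) (hmem p)⟩
  have hc1 : (Finset.Ici p).card = r - (p : ℕ) := Fin.card_Ici p
  have hc2 : (LFn hr s k).toFinset.card ≤ k :=
    le_trans (List.toFinset_card_le _) (le_of_eq hlen)
  have hc3 := Finset.le_card_sdiff (LFn hr s k).toFinset (Finset.Ici p)
  have hp := p.isLt
  have hpos : 0 < (Finset.Ici p \ (LFn hr s k).toFinset).card := by omega
  exact Finset.card_pos.1 (lt_of_lt_of_le hpos (Finset.card_le_card hsub))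

lemma sig_spec {r : ℕ} (hr : 0 < r) (s : Fin r → Intv)
    (hmem : ∀ t : Fin r, (s t).1 ≤ (s t).2)
    (hi : ∀ p q : Fin r, p ≤ q → (s q).1 ≤ (s p).1) (p : Fin r) :
    sigFn hr s p ∈ candFn s (LFn hr s (r - 1 - (p : ℕ))) p ∧
      ∀ t ∈ candFn s (LFn hr s (r - 1 - (p : ℕ))) p, sigFn hr s p ≤ t := by
  have hne := cand_ne hr s hmem hi p
  unfold sigFn stepFn
  rw [dif_pos hne]
  exact ⟨Finset.min'_mem _ hne, fun t ht => Finset.min'_le _ t ht⟩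

lemma sigma_exists {r : ℕ} (hr : 0 < r) (s : Fin r → Intv)
    (hmem : ∀ t : Fin r, (s t).1 ≤ (s t).2)
    (hi : ∀ p q : Fin r, p ≤ q → (s q).1 ≤ (s p).1) :
    ∃ σ : Equiv.Perm (Fin r), ∀ p : Fin r,
      IsLeast { t : Fin r | (∀ q : Fin r, p < q → σ q ≠ t) ∧ (s t).1 ≤ (s p).2 } (σ p) := by
  have key : ∀ p q : Fin r, p < q → sigFn hr s p ≠ sigFn hr s q := by
    intro p q hlt
    have h1 : sigFn hr s p ∉ LFn hr s (r - 1 - (p : ℕ)) := by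
      have h := (sig_spec hr s hmem hi p).1
      simp only [candFn, Finset.mem_filter, Finset.mem_univ, true_and] at h
      exact h.1
    have h2 : sigFn hr s q ∈ LFn hr s (r - 1 - (p : ℕ)) := by
      rw [mem_LFn hr s (r - 1 - (p : ℕ)) (by omega) _]
      refine ⟨q, ?_, rfl⟩
      have hp := p.isLt
      have := Fin.lt_def.1 hlt
      omega
    intro he
    rw [he] at h1
    exact h1 h2
  have hinj : Function.Injective (sigFn hr s) := by
    intro p q hpq
    by_contra hne
    rcases lt_or_gt_of_ne hne with h | h
    · exact key p q h hpq
    · exact key q p h hpq.symm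
  refine ⟨Equiv.ofBijective _ (Finite.injective_iff_bijective.1 hinj), fun p => ?_⟩
  have hset : { t : Fin r | (∀ q : Fin r, p < q →
      (Equiv.ofBijective _ (Finite.injective_iff_bijective.1 hinj)) q ≠ t) ∧
      (s t).1 ≤ (s p).2 } = ↑(candFn s (LFn hr s (r - 1 - (p : ℕ))) p) := by
    ext t
    simp only [Set.mem_setOf_eq, Finset.coe_filter, candFn, Finset.mem_coe,
      Finset.mem_filter, Finset.mem_univ, true_and]
    constructor
    · rintro ⟨hq, hle⟩
      refine ⟨?_, hle⟩
      intro hmem'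
      rw [mem_LFn hr s (r - 1 - (p : ℕ)) (by omega) t] at hmem'
      obtain ⟨q, hq2, he⟩ := hmem'
      have hp := p.isLt
      exact hq q (Fin.lt_def.2 (by omega)) he
    · rintro ⟨hnot, hle⟩
      refine ⟨?_, hle⟩
      intro q hlt he
      refine hnot ((mem_LFn hr s (r - 1 - (p : ℕ)) (by omega) t).2 ⟨q, ?_, he⟩)
      have hp := p.isLt
      have := Fin.lt_def.1 hlt
      omega
  rw [IsLeast, hset]
  constructor
  · exact (sig_spec hr s hmem hi p).1
  · intro t ht
    exact (sig_spec hr s hmem hi p).2 t ht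

/-- for `s ∈ 𝕀ₙ^r` with `n ≥ n(s)` and both endpoint sequences weakly
decreasing, the permutation `σ_s` defined by downward recursion
(`σ_s(p)` is the least index `t`, not of the form `σ_s(q)` for `q > p`, with
`i_t ≤ j_p`) is well defined (encoded via the `IsLeast` characterization), and
`s₀ = ([i_{σ_s(1)},j_1],…,[i_{σ_s(r)},j_r])` lies in `𝕀_{n,+}^r`, belongs to `s̄[n]`,
is closed, and no pair of its entries is connected. -/
theorem stmt_7 (n r : ℕ) (s : Fin r → Intv)
    (hI : ∀ t, memI n (s t))
    (hn : ∀ t p : Fin r, (s t).2 - (s p).1 ≤ (n : ℤ) + 1)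
    (hi : ∀ p q : Fin r, p ≤ q → (s q).1 ≤ (s p).1)
    (hj : ∀ p q : Fin r, p ≤ q → (s q).2 ≤ (s p).2) :
    ∃ σ : Equiv.Perm (Fin r),
      (∀ p : Fin r,
        IsLeast { t : Fin r | (∀ q : Fin r, p < q → σ q ≠ t) ∧ (s t).1 ≤ (s p).2 } (σ p)) ∧
      Iplus n (fun p => ((s (σ p)).1, (s p).2)) ∧
      (fun p => ((s (σ p)).1, (s p).2)) ∈ sbar n s ∧
      IsClosedElt n (fun p => ((s (σ p)).1, (s p).2)) ∧
      ∀ p t : Fin r, p < t →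
        ¬ Conn n ((s (σ p)).1, (s p).2) ((s (σ t)).1, (s t).2) := by
  by_cases hr : 0 < r
  case neg =>
    have hr0 : r = 0 := by omega
    subst hr0
    refine ⟨1, fun p => p.elim0, ⟨fun t => t.elim0, fun p hp => absurd hp (by omega)⟩,
      ?_, ?_, fun p => p.elim0⟩
    · have : (fun p : Fin 0 => ((s ((1 : Equiv.Perm (Fin 0)) p)).1, (s p).2)) = s := by
        funext u; exact u.elim0
      rw [this]; exact self_mem_sbar n s
    · intro s' _
      exact ⟨1, funext fun u => u.elim0⟩
  case pos =>
  obtain ⟨σ, hleast⟩ := sigma_exists hr s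
    (fun t => by have := (hI t).1; linarith) hi
  have hnc : ∀ p t : Fin r, p < t →
      ¬ Conn n ((s (σ p)).1, (s p).2) ((s (σ t)).1, (s t).2) := by
    intro p t hpt hc
    rcases hc with ⟨hb1, hb2, _, _, _⟩ | ⟨_, _, hb3, _, _⟩
    · have hmem' : σ p ∈ { t' : Fin r | (∀ q : Fin r, t < q → σ q ≠ t') ∧
          (s t').1 ≤ (s t).2 } := by
        refine ⟨fun q hq he => absurd (σ.injective he) (ne_of_gt (lt_trans hpt hq)), ?_⟩
        exact hb2
      have hle : σ t ≤ σ p := (hleast t).2 hmem'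
      exact absurd hb1 (not_lt.2 (hi (σ t) (σ p) hle))
    · exact absurd hb3 (not_lt.2 (hj p t (le_of_lt hpt)))
  refine ⟨σ, hleast, ?_, ?_, ?_, hnc⟩
  · refine ⟨fun t => ⟨?_, ?_⟩, fun p hp => ?_⟩
    · simpa using sub_nonneg.2 (hleast t).1.2
    · simpa using hn t (σ t)
    · exact hj _ _ (by simp [Fin.le_def])
  · exact state_mem_sbar s hn hi hj (invs σ).card σ le_rfl (fun u => (hleast u).1.2)
  · set s₀ : Fin r → Intv := fun p => ((s (σ p)).1, (s p).2) with hs₀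
    have hnc' : ∀ a b : Fin r, a ≠ b → ¬ Conn n (s₀ a) (s₀ b) := by
      intro a b hab hc
      rcases lt_or_gt_of_ne hab with h | h
      · exact hnc a b h hc
      · exact hnc b a h (conn_comm.1 hc)
    intro s' hs'
    have hJ : IsClosedSet n
        {g : Fin r → Intv | ∃ w : Equiv.Perm (Fin r), g = fun u => s₀ (w u)} := by
      rintro x ⟨w, rfl⟩ m l hml
      constructor
      · intro s'' hs''
        exfalso
        have hno : ¬ Conn n (s₀ (w m)) (s₀ (w l)) :=
          hnc' _ _ (fun he => (ne_of_lt hml) (w.injective he))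
        have h0 : tau n m l (fun u => s₀ (w u)) = none := by
          unfold tau
          exact if_neg hno
        rw [h0] at hs''
        cases hs''
      · intro _
        exact ⟨(Equiv.swap m l).trans w, rfl⟩
    exact Set.mem_sInter.1 hs' _ ⟨hJ, ⟨1, rfl⟩⟩
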